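/- (Corollary to Theorem 2.3, q-case: covariance for the q-trinomial distribution of the second kind.) Let n ≥ 1 be a natural number and β₁, β₂ ∈ (0,1). Define E₁ := ∑_{x₁+x₂≤n} [x₁]_q·u(x₁,x₂) (sum over all pairs of natural numbers with x₁+x₂ ≤ n), E₂ := ∑_{x₂=1}^{n} ∑_{x₁=0}^{n−x₂} [x₂]_q·u(x₁,x₂)/(1 − β₁·q^{n−1−x₁}), and E₁₂ := ∑_{x₂=1}^{n} ∑_{x₁=0}^{n−x₂} [x₁]_q·[x₂]_q·u(x₁,x₂)/(1 − β₁·q^{n−1−x₁}). Then E₁₂ − E₁·E₂ = [n]_q · β₁ · β₂ · ([n−1]_q − [n]_q). -/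

import Mathlib

open Finset

/-- q-integer `[k]_q = (1 - q^k)/(1 - q)`. -/
noncomputable def qInt (q : ℝ) (k : ℤ) : ℝ := (1 - q ^ k) / (1 - q)

/-- q-factorial `[n]_q! = ∏_{i=1}^n [i]_q`. -/
noncomputable def qFact (q : ℝ) (n : ℕ) : ℝ := ∏ i ∈ Finset.Icc 1 n, qInt q (i : ℤ)

/-- q-binomial coefficient `C_q(n,k)`. -/
noncomputable def qBinom (q : ℝ) (n k : ℕ) : ℝ := qFact q n / (qFact q k * qFact q (n - k))

/-- q-falling factorial `[u]_{m,q} = ∏_{i=1}^m [u-i+1]_q`. -/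
noncomputable def qFall (q : ℝ) (u : ℤ) (m : ℕ) : ℝ := ∏ i ∈ Finset.Icc 1 m, qInt q (u - (i : ℤ) + 1)

/-- `[k]_{q⁻¹} = q^{1-k} · [k]_q`. -/
noncomputable def qIntInv (q : ℝ) (k : ℤ) : ℝ := q ^ (1 - k) * qInt q k

/-- `[u]_{m,q⁻¹} = ∏_{i=1}^m [u-i+1]_{q⁻¹}`. -/
noncomputable def qFallInv (q : ℝ) (u : ℤ) (m : ℕ) : ℝ := ∏ i ∈ Finset.Icc 1 m, qIntInv q (u - (i : ℤ) + 1)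

/-- `b(k) = k(k-1)/2`. -/
def bb (k : ℕ) : ℕ := k * (k - 1) / 2

/-- `⟨1 ⊕ α⟩_m = ∏_{i=1}^m (1 + α q^{i-1})`. -/
noncomputable def oplus (q α : ℝ) (m : ℕ) : ℝ := ∏ i ∈ Finset.Icc 1 m, (1 + α * q ^ (i - 1))

/-- `⟨1 ⊖ β⟩_m = ∏_{i=1}^m (1 - β q^{i-1})`. -/
noncomputable def ominus (q β : ℝ) (m : ℕ) : ℝ := ∏ i ∈ Finset.Icc 1 m, (1 - β * q ^ (i - 1))

/-- q-trinomial coefficient `T_q(n; x₁, x₂)`. -/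
noncomputable def qTri (q : ℝ) (n x1 x2 : ℕ) : ℝ :=
  qFact q n / (qFact q x1 * qFact q x2 * qFact q (n - x1 - x2))

/-- pmf of the q-trinomial distribution of the second kind. -/
noncomputable def upmf (q b1 b2 : ℝ) (n x1 x2 : ℕ) : ℝ :=
  qTri q n x1 x2 * b1 ^ x1 * b2 ^ x2 * ominus q b1 (n - x1) * ominus q b2 (n - x1 - x2)

/-!
The pmf factors as `u(x₁, x₂) = b_{β₁}(x₁, n - x₁) · b_{β₂}(x₂, n - x₁ - x₂)`, where
`b_β(i, j) = C_q(i + j, i) β^i ⟨1 ⊖ β⟩_j` is the q-binomial law of the second kind.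
Conditioning on the first trial gives `Σ b_β(m + 1) = (1 - β) Σ b_{qβ}(m) + β Σ b_β(m)`, so every
such law has total mass `1`, and the absorption identity
`[i] C_q(i + j, i) = [i + j] C_q(i + j - 1, i - 1)` gives it mean `[m] β`.
Dividing by `1 - β₁ q^{n-1-x₁}` removes the last factor of `⟨1 ⊖ β₁⟩_{n-x₁}`; combined with
absorption this turns the `x₂`-moment into `[n] β₂` times the law of `x₁` with `n - 1` trials.
Hence `E₁ = [n] β₁`, `E₂ = [n] β₂` and `E₁₂ = [n] β₂ · [n - 1] β₁`.
-/

section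

variable {q : ℝ}

lemma qInt_natCast (k : ℕ) : qInt q k = (1 - q ^ k) / (1 - q) := by
  simp [qInt]

@[simp]
lemma qInt_zero : qInt q 0 = 0 := by
  simp [qInt]

lemma qInt_natCast_add (a b : ℕ) : qInt q ↑(a + b) = qInt q a + q ^ a * qInt q b := by
  simp only [qInt_natCast, pow_add]
  ring

lemma qInt_natCast_ne_zero (hq : |q| ≠ 1) {k : ℕ} (hk : k ≠ 0) : qInt q k ≠ 0 := by
  have hqk : q ^ k ≠ 1 := fun h => hq <| (pow_eq_one_iff_of_nonneg (abs_nonneg q) hk).1 <| by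
    rw [← abs_pow, h, abs_one]
  have hq1 : q ≠ 1 := fun h => hq (by simp [h])
  rw [qInt_natCast]
  exact div_ne_zero (sub_ne_zero.2 hqk.symm) (sub_ne_zero.2 hq1.symm)

@[simp]
lemma qFact_zero : qFact q 0 = 1 := by
  simp [qFact]

lemma qFact_succ (n : ℕ) : qFact q (n + 1) = qFact q n * qInt q ↑(n + 1) := by
  rw [qFact, prod_Icc_succ_top (by omega), qFact]

lemma qFact_ne_zero (hq : |q| ≠ 1) (n : ℕ) : qFact q n ≠ 0 :=
  prod_ne_zero_iff.2 fun i hi => qInt_natCast_ne_zero hq (by simp at hi; omega)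

lemma ominus_eq_prod_range (β : ℝ) (m : ℕ) : ominus q β m = ∏ i ∈ range m, (1 - β * q ^ i) := by
  induction m with
  | zero => simp [ominus]
  | succ m ih => rw [ominus, prod_Icc_succ_top (by omega), ← ominus, ih, prod_range_succ]; simp

lemma ominus_succ (β : ℝ) (m : ℕ) : ominus q β (m + 1) = ominus q β m * (1 - β * q ^ m) := by
  rw [ominus_eq_prod_range, ominus_eq_prod_range, prod_range_succ]

lemma ominus_succ' (β : ℝ) (m : ℕ) : ominus q β (m + 1) = (1 - β) * ominus q (q * β) m := by
  rw [ominus_eq_prod_range, ominus_eq_prod_range, prod_range_succ']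
  simp only [pow_succ, pow_zero, mul_one]
  rw [mul_comm]
  congr 1
  exact prod_congr rfl fun i _ => by ring

/-- The q-binomial coefficient `C_q(i + j, i)`, indexed by the two block sizes so that no
truncated subtraction occurs. -/
noncomputable def qChoose (q : ℝ) (i j : ℕ) : ℝ := qFact q (i + j) / (qFact q i * qFact q j)

lemma qChoose_comm (i j : ℕ) : qChoose q i j = qChoose q j i := by
  rw [qChoose, qChoose, add_comm, mul_comm]

lemma qChoose_zero_left (hq : |q| ≠ 1) (j : ℕ) : qChoose q 0 j = 1 := by
  simp [qChoose, div_self (qFact_ne_zero hq j)]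

lemma qChoose_zero_right (hq : |q| ≠ 1) (i : ℕ) : qChoose q i 0 = 1 := by
  rw [qChoose_comm, qChoose_zero_left hq]

lemma qChoose_succ_succ (hq : |q| ≠ 1) (i j : ℕ) :
    qChoose q (i + 1) (j + 1) = q ^ (i + 1) * qChoose q (i + 1) j + qChoose q i (j + 1) := by
  have hi := qFact_ne_zero hq i
  have hj := qFact_ne_zero hq j
  have hi' := qInt_natCast_ne_zero hq (k := i + 1) (by omega)
  have hj' := qInt_natCast_ne_zero hq (k := j + 1) (by omega)
  rw [qChoose, qChoose, qChoose, show i + 1 + j = i + j + 1 by ring,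
    show i + (j + 1) = i + j + 1 by ring, show i + 1 + (j + 1) = i + j + 1 + 1 by ring,
    qFact_succ (i + j + 1), show i + j + 1 + 1 = (i + 1) + (j + 1) by ring, qInt_natCast_add,
    qFact_succ i, qFact_succ j]
  field_simp
  ring

lemma qInt_mul_qChoose_succ_right (hq : |q| ≠ 1) (i j : ℕ) :
    qInt q ↑(j + 1) * qChoose q i (j + 1) = qInt q ↑(i + j + 1) * qChoose q i j := by
  have hi := qFact_ne_zero hq i
  have hj := qFact_ne_zero hq j
  have hj' := qInt_natCast_ne_zero hq (k := j + 1) (by omega)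
  rw [qChoose, qChoose, ← add_assoc, qFact_succ, qFact_succ j]
  field_simp

/-- Weight of `i` successes and `j` failures in the q-binomial distribution of the second kind. -/
noncomputable def qBinomPMF (q β : ℝ) (i j : ℕ) : ℝ := qChoose q i j * β ^ i * ominus q β j

section

variable (hq : |q| ≠ 1)
include hq

/-- First-step decomposition: the first trial fails with probability `1 - β`, after which the
remaining trials follow the law with parameter `q * β`, or it succeeds with probability `β`. -/
lemma qBinomPMF_eq_first_step (β : ℝ) {i j : ℕ} (hij : i + j ≠ 0) :
    qBinomPMF q β i j =
      (if j = 0 then 0 else (1 - β) * qBinomPMF q (q * β) i (j - 1)) +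
        (if i = 0 then 0 else β * qBinomPMF q β (i - 1) j) := by
  rcases i with _ | i <;> rcases j with _ | j
  · simp at hij
  · simp [qBinomPMF, qChoose_zero_left hq, ominus_succ']
  · simp [qBinomPMF, qChoose_zero_right hq, ominus, pow_succ]
    ring
  · simp only [qBinomPMF, qChoose_succ_succ hq, ominus_succ', add_tsub_cancel_right,
      Nat.add_eq_zero_iff, one_ne_zero, and_false, if_false, mul_pow]
    ring

lemma sum_antidiagonal_succ_qBinomPMF (β : ℝ) (m : ℕ) :
    ∑ p ∈ antidiagonal (m + 1), qBinomPMF q β p.1 p.2 =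
      (1 - β) * ∑ p ∈ antidiagonal m, qBinomPMF q (q * β) p.1 p.2 +
        β * ∑ p ∈ antidiagonal m, qBinomPMF q β p.1 p.2 := by
  rw [sum_congr rfl fun p hp => qBinomPMF_eq_first_step hq β (by rw [mem_antidiagonal.1 hp]; omega),
    sum_add_distrib, Nat.sum_antidiagonal_succ', Nat.sum_antidiagonal_succ]
  simp [mul_sum]

theorem sum_antidiagonal_qBinomPMF (β : ℝ) (m : ℕ) :
    ∑ p ∈ antidiagonal m, qBinomPMF q β p.1 p.2 = 1 := by
  induction m generalizing β with
  | zero => simp [qBinomPMF, qChoose_zero_left hq, ominus]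
  | succ m ih => rw [sum_antidiagonal_succ_qBinomPMF hq, ih, ih]; ring

lemma qInt_mul_qBinomPMF_succ_left (β : ℝ) (i j : ℕ) :
    qInt q ↑(i + 1) * qBinomPMF q β (i + 1) j = qInt q ↑(i + j + 1) * β * qBinomPMF q β i j := by
  have h := qInt_mul_qChoose_succ_right hq j i
  rw [qChoose_comm j, qChoose_comm j, add_comm j i] at h
  simp only [qBinomPMF, pow_succ]
  linear_combination (β ^ i * β * ominus q β j) * h

theorem sum_antidiagonal_qInt_mul_qBinomPMF (β : ℝ) (m : ℕ) :
    ∑ p ∈ antidiagonal m, qInt q p.1 * qBinomPMF q β p.1 p.2 = qInt q m * β := by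
  cases m with
  | zero => simp
  | succ m =>
    have hterm : ∀ p ∈ antidiagonal m, qInt q ↑(p.1 + 1) * qBinomPMF q β (p.1 + 1) p.2 =
        qInt q ↑(m + 1) * β * qBinomPMF q β p.1 p.2 := fun p hp => by
      rw [qInt_mul_qBinomPMF_succ_left hq, mem_antidiagonal.1 hp]
    rw [Nat.sum_antidiagonal_succ, Nat.cast_zero, qInt_zero, zero_mul, zero_add,
      sum_congr rfl hterm, ← mul_sum, sum_antidiagonal_qBinomPMF hq, mul_one]

lemma sum_Icc_qInt_mul_qBinomPMF (β : ℝ) (m : ℕ) :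
    ∑ k ∈ Icc 1 m, qInt q k * qBinomPMF q β k (m - k) = qInt q m * β := by
  rw [← sum_antidiagonal_qInt_mul_qBinomPMF hq β m,
    Nat.sum_antidiagonal_eq_sum_range_succ (fun i j => qInt q i * qBinomPMF q β i j),
    Nat.range_succ_eq_Icc_zero, ← insert_Icc_add_one_left_eq_Icc m.zero_le, sum_insert (by simp)]
  simp

lemma qInt_mul_qBinomPMF_succ_right_div (β : ℝ) (i j : ℕ) (hβ : β * q ^ j ≠ 1) :
    qInt q ↑(j + 1) * qBinomPMF q β i (j + 1) / (1 - β * q ^ j) =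
      qInt q ↑(i + j + 1) * qBinomPMF q β i j := by
  rw [div_eq_iff (sub_ne_zero.2 hβ.symm), qBinomPMF, qBinomPMF, ominus_succ]
  linear_combination (β ^ i * ominus q β j * (1 - β * q ^ j)) * qInt_mul_qChoose_succ_right hq i j

lemma upmf_eq_mul (β₁ β₂ : ℝ) {n x₁ x₂ : ℕ} (h : x₁ + x₂ ≤ n) :
    upmf q β₁ β₂ n x₁ x₂ = qBinomPMF q β₁ x₁ (n - x₁) * qBinomPMF q β₂ x₂ (n - x₁ - x₂) := by
  have h₁ := qFact_ne_zero hq x₁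
  have h₂ := qFact_ne_zero hq x₂
  have h₃ := qFact_ne_zero hq (n - x₁)
  have h₄ := qFact_ne_zero hq (n - x₁ - x₂)
  rw [upmf, qTri, qBinomPMF, qBinomPMF, qChoose, qChoose, Nat.add_sub_cancel' (by omega),
    Nat.add_sub_cancel' (by omega)]
  field_simp

lemma sum_sum_mul_upmf (g : ℕ → ℝ) (β₁ β₂ : ℝ) (n : ℕ) :
    ∑ x₁ ∈ range (n + 1), ∑ x₂ ∈ range (n - x₁ + 1), g x₁ * upmf q β₁ β₂ n x₁ x₂ =
      ∑ p ∈ antidiagonal n, g p.1 * qBinomPMF q β₁ p.1 p.2 := by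
  rw [Nat.sum_antidiagonal_eq_sum_range_succ (fun i j => g i * qBinomPMF q β₁ i j)]
  refine sum_congr rfl fun x₁ hx₁ => ?_
  calc ∑ x₂ ∈ range (n - x₁ + 1), g x₁ * upmf q β₁ β₂ n x₁ x₂
      = g x₁ * qBinomPMF q β₁ x₁ (n - x₁) *
          ∑ x₂ ∈ range (n - x₁ + 1), qBinomPMF q β₂ x₂ (n - x₁ - x₂) := by
        rw [mul_sum]
        refine sum_congr rfl fun x₂ hx₂ => ?_
        rw [upmf_eq_mul hq _ _ (by simp at hx₁ hx₂; omega)]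
        ring
    _ = g x₁ * qBinomPMF q β₁ x₁ (n - x₁) := by
        rw [← Nat.sum_antidiagonal_eq_sum_range_succ (qBinomPMF q β₂),
          sum_antidiagonal_qBinomPMF hq, mul_one]

lemma sum_Icc_sum_mul_qInt_mul_upmf_div (g : ℕ → ℝ) (β₁ β₂ : ℝ) (hβ₁ : ∀ j : ℕ, β₁ * q ^ j ≠ 1)
    (n : ℕ) :
    ∑ x₂ ∈ Icc 1 n, ∑ x₁ ∈ range (n - x₂ + 1),
        g x₁ * qInt q x₂ * upmf q β₁ β₂ n x₁ x₂ / (1 - β₁ * q ^ (n - 1 - x₁)) =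
      qInt q n * β₂ * ∑ p ∈ antidiagonal (n - 1), g p.1 * qBinomPMF q β₁ p.1 p.2 := by
  cases n with
  | zero => simp
  | succ m =>
    rw [sum_comm' (t' := range (m + 1)) (s' := fun x₁ => Icc 1 (m + 1 - x₁))
        (fun x₂ x₁ => by simp only [mem_Icc, mem_range]; omega),
      Nat.add_sub_cancel,
      Nat.sum_antidiagonal_eq_sum_range_succ (fun i j => g i * qBinomPMF q β₁ i j), mul_sum]
    refine sum_congr rfl fun x₁ hx₁ => ?_
    obtain ⟨j, rfl⟩ : ∃ j, m = x₁ + j := ⟨m - x₁, by simp at hx₁; omega⟩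
    rw [show x₁ + j + 1 - x₁ = j + 1 by omega, show x₁ + j - x₁ = j by omega]
    calc ∑ x₂ ∈ Icc 1 (j + 1),
          g x₁ * qInt q x₂ * upmf q β₁ β₂ (x₁ + j + 1) x₁ x₂ / (1 - β₁ * q ^ j)
        = g x₁ * (qBinomPMF q β₁ x₁ (j + 1) / (1 - β₁ * q ^ j)) *
            ∑ x₂ ∈ Icc 1 (j + 1), qInt q x₂ * qBinomPMF q β₂ x₂ (j + 1 - x₂) := by
          rw [mul_sum]
          refine sum_congr rfl fun x₂ hx₂ => ?_
          rw [upmf_eq_mul hq _ _ (by simp at hx₂; omega), show x₁ + j + 1 - x₁ = j + 1 by omega]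
          ring
      _ = g x₁ * β₂ * (qInt q ↑(j + 1) * qBinomPMF q β₁ x₁ (j + 1) / (1 - β₁ * q ^ j)) := by
          rw [sum_Icc_qInt_mul_qBinomPMF hq]
          ring
      _ = _ := by
          rw [qInt_mul_qBinomPMF_succ_right_div hq _ _ _ (hβ₁ j)]
          ring

end

end

theorem stmt14_general (q : ℝ) (hq0 : 0 < q) (hq1 : q < 1) (n : ℕ) (hn : 1 ≤ n) (β1 β2 : ℝ)
    (hβ1 : 0 < β1) (hβ1' : β1 < 1) :
    (∑ x2 ∈ Finset.Icc 1 n, ∑ x1 ∈ Finset.range (n - x2 + 1),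
        qInt q (x1 : ℤ) * qInt q (x2 : ℤ) * upmf q β1 β2 n x1 x2 /
          (1 - β1 * q ^ (n - 1 - x1)))
    - (∑ x1 ∈ Finset.range (n + 1), ∑ x2 ∈ Finset.range (n - x1 + 1),
        qInt q (x1 : ℤ) * upmf q β1 β2 n x1 x2)
      * (∑ x2 ∈ Finset.Icc 1 n, ∑ x1 ∈ Finset.range (n - x2 + 1),
        qInt q (x2 : ℤ) * upmf q β1 β2 n x1 x2 / (1 - β1 * q ^ (n - 1 - x1)))
      = qInt q (n : ℤ) * β1 * β2 * (qInt q ((n : ℤ) - 1) - qInt q (n : ℤ)) := by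
  have hq : |q| ≠ 1 := by
    rw [abs_of_pos hq0]
    exact hq1.ne
  have hβq (j : ℕ) : β1 * q ^ j ≠ 1 :=
    (mul_lt_one_of_nonneg_of_lt_one_left hβ1.le hβ1' (pow_le_one₀ hq0.le hq1.le)).ne
  have hE₁₂ := sum_Icc_sum_mul_qInt_mul_upmf_div hq (fun x₁ => qInt q x₁) β1 β2 hβq n
  have hE₂ := sum_Icc_sum_mul_qInt_mul_upmf_div hq (fun _ => 1) β1 β2 hβq n
  simp only [one_mul] at hE₂
  rw [hE₁₂, hE₂, sum_sum_mul_upmf hq (fun x₁ => qInt q x₁), sum_antidiagonal_qInt_mul_qBinomPMF hq,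
    sum_antidiagonal_qInt_mul_qBinomPMF hq, sum_antidiagonal_qBinomPMF hq, Nat.cast_pred hn]
  ring

theorem stmt14 (q : ℝ) (hq0 : 0 < q) (hq1 : q < 1) (n : ℕ) (hn : 1 ≤ n) (β1 β2 : ℝ)
    (hβ1 : 0 < β1) (hβ1' : β1 < 1) (hβ2 : 0 < β2) (hβ2' : β2 < 1) :
    (∑ x2 ∈ Finset.Icc 1 n, ∑ x1 ∈ Finset.range (n - x2 + 1),
        qInt q (x1 : ℤ) * qInt q (x2 : ℤ) * upmf q β1 β2 n x1 x2 /
          (1 - β1 * q ^ (n - 1 - x1)))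
    - (∑ x1 ∈ Finset.range (n + 1), ∑ x2 ∈ Finset.range (n - x1 + 1),
        qInt q (x1 : ℤ) * upmf q β1 β2 n x1 x2)
      * (∑ x2 ∈ Finset.Icc 1 n, ∑ x1 ∈ Finset.range (n - x2 + 1),
        qInt q (x2 : ℤ) * upmf q β1 β2 n x1 x2 / (1 - β1 * q ^ (n - 1 - x1)))
      = qInt q (n : ℤ) * β1 * β2 * (qInt q ((n : ℤ) - 1) - qInt q (n : ℤ)) :=
  stmt14_general q hq0 hq1 n hn β1 β2 hβ1 hβ1'
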